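/- Let B₄ be the braid group on 4 strands, presented with generators σ₁, σ₂, σ₃ and relations σ₁σ₂σ₁ = σ₂σ₁σ₂, σ₂σ₃σ₂ = σ₃σ₂σ₃, and σ₁σ₃ = σ₃σ₁. Then for every natural number n, the element (σ₁σ₃⁻¹)ⁿ can be written as a product of at most 10 elements of B₄, each of which is a conjugate of σ₁ or of σ₁⁻¹. Consequently the cyclic subgroup generated by σ₁σ₃⁻¹ is bounded by 10 in the biinvariant word norm of B₄ associated to the normally generating set {σ₁, σ₁⁻¹}. -/

import Mathlib

/-- The braid relators of the braid group on 4 strands. -/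
def braidRels4 : Set (FreeGroup (Fin 3)) :=
  { FreeGroup.of 0 * FreeGroup.of 1 * FreeGroup.of 0 *
      (FreeGroup.of 1)⁻¹ * (FreeGroup.of 0)⁻¹ * (FreeGroup.of 1)⁻¹,
    FreeGroup.of 1 * FreeGroup.of 2 * FreeGroup.of 1 *
      (FreeGroup.of 2)⁻¹ * (FreeGroup.of 1)⁻¹ * (FreeGroup.of 2)⁻¹,
    FreeGroup.of 0 * FreeGroup.of 2 * (FreeGroup.of 0)⁻¹ * (FreeGroup.of 2)⁻¹ }

/-- The braid group on 4 strands as a presented group. -/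
abbrev BraidGroup4 : Type := PresentedGroup braidRels4

/-!
Since `σ₁` and `σ₃` commute, `(σ₁σ₃⁻¹)ⁿ = σ₁ⁿ σ₃⁻ⁿ`. The braid `w = σ₂σ₃σ₁σ₂` conjugates `σ₁`
to `σ₃`, so `σ₃ⁿ = w σ₁ⁿ w⁻¹` and `(σ₁σ₃⁻¹)ⁿ = ⁅σ₁ⁿ, w⁆`. A commutator `⁅h, w⁆` is the conjugate
`h w h⁻¹` times `w⁻¹`, so its biinvariant norm is at most `2‖w‖`, and `‖w‖ ≤ 4` because all the
`σᵢ` are conjugate to `σ₁`. Hence `‖(σ₁σ₃⁻¹)ⁿ‖ ≤ 8` for every `n`.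
-/

open scoped commutatorElement

section ConjNorm

variable {G : Type*} [Group G] {s g h : G} {k m : ℕ}

/-- The biinvariant word norm of `g` with respect to `{s, s⁻¹}` is at most `k`. -/
def ConjNormLE (s : G) (k : ℕ) (g : G) : Prop :=
  ∃ l : List G, l.length ≤ k ∧ (∀ x ∈ l, IsConj s x ∨ IsConj s⁻¹ x) ∧ l.prod = g

theorem IsConj.inv {a b : G} (h : IsConj a b) : IsConj a⁻¹ b⁻¹ := by
  obtain ⟨c, rfl⟩ := isConj_iff.mp h
  exact isConj_iff.mpr ⟨c, conj_inv.symm⟩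

namespace ConjNormLE

theorem of_isConj (h : IsConj s g ∨ IsConj s⁻¹ g) : ConjNormLE s 1 g :=
  ⟨[g], le_rfl, by simpa using h, List.prod_singleton⟩

theorem mul (hg : ConjNormLE s k g) (hh : ConjNormLE s m h) : ConjNormLE s (k + m) (g * h) := by
  obtain ⟨l₁, hlen₁, hl₁, rfl⟩ := hg
  obtain ⟨l₂, hlen₂, hl₂, rfl⟩ := hh
  refine ⟨l₁ ++ l₂, by simp only [List.length_append]; omega, ?_, List.prod_append⟩
  simpa only [List.mem_append, or_imp, forall_and] using ⟨hl₁, hl₂⟩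

theorem conj (hg : ConjNormLE s k g) (β : G) : ConjNormLE s k (β * g * β⁻¹) := by
  obtain ⟨l, hlen, hl, rfl⟩ := hg
  refine ⟨l.map (MulAut.conj β), by simpa using hlen, ?_, (map_list_prod _ l).symm⟩
  simp only [List.mem_map, forall_exists_index, and_imp, forall_apply_eq_imp_iff₂]
  intro x hx
  have hconj : IsConj x (MulAut.conj β x) := isConj_iff.mpr ⟨β, rfl⟩
  exact (hl x hx).imp (·.trans hconj) (·.trans hconj)

theorem inv (hg : ConjNormLE s k g) : ConjNormLE s k g⁻¹ := by
  obtain ⟨l, hlen, hl, rfl⟩ := hg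
  refine ⟨(l.map (·⁻¹)).reverse, by simpa using hlen, ?_, (List.prod_inv_reverse l).symm⟩
  simp only [List.mem_reverse, List.mem_map, forall_exists_index, and_imp,
    forall_apply_eq_imp_iff₂]
  intro x hx
  rcases hl x hx with hs | hs
  · exact Or.inr hs.inv
  · exact Or.inl (by simpa using hs.inv)

theorem commutator (hg : ConjNormLE s k g) (x : G) : ConjNormLE s (2 * k) ⁅x, g⁆ := by
  rw [commutatorElement_def, two_mul]
  exact (hg.conj x).mul hg.inv

end ConjNormLE

end ConjNorm

section GroupIdentities

variable {G : Type*} [Group G]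

theorem mul_conj_eq_of_braid {a b : G} (h : a * b * a = b * a * b) :
    a * b * a * (a * b)⁻¹ = b := by
  rw [h]; group

theorem mul_inv_pow_eq_commutatorElement {a c w : G} (hac : Commute a c)
    (hw : w * a * w⁻¹ = c) (n : ℕ) : (a * c⁻¹) ^ n = ⁅a ^ n, w⁆ := by
  rw [hac.inv_right.mul_pow, inv_pow, ← hw, conj_pow, commutatorElement_def]
  group

end GroupIdentities

namespace BraidGroup4

local notation "σ₁" => (PresentedGroup.of 0 : BraidGroup4)
local notation "σ₂" => (PresentedGroup.of 1 : BraidGroup4)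
local notation "σ₃" => (PresentedGroup.of 2 : BraidGroup4)

theorem braid_rel_12 : σ₁ * σ₂ * σ₁ = σ₂ * σ₁ * σ₂ := by
  have h := PresentedGroup.mk_eq_mk_of_mul_inv_mem (rels := braidRels4)
    (x := .of 0 * .of 1 * .of 0) (y := .of 1 * .of 0 * .of 1) (.inl (by group))
  simp only [map_mul] at h
  exact h

theorem braid_rel_23 : σ₂ * σ₃ * σ₂ = σ₃ * σ₂ * σ₃ := by
  have h := PresentedGroup.mk_eq_mk_of_mul_inv_mem (rels := braidRels4)
    (x := .of 1 * .of 2 * .of 1) (y := .of 2 * .of 1 * .of 2) (.inr (.inl (by group)))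
  simp only [map_mul] at h
  exact h

theorem commute_σ₁_σ₃ : Commute σ₁ σ₃ := by
  have h := PresentedGroup.mk_eq_mk_of_mul_inv_mem (rels := braidRels4)
    (x := .of 0 * .of 2) (y := .of 2 * .of 0) (.inr (.inr (Set.mem_singleton_of_eq (by group))))
  simp only [map_mul] at h
  exact h

theorem conj_σ₁_eq_σ₃ :
    σ₂ * σ₃ * (σ₁ * σ₂) * σ₁ * (σ₂ * σ₃ * (σ₁ * σ₂))⁻¹ = σ₃ := by
  calc _ = σ₂ * σ₃ * (σ₁ * σ₂ * σ₁ * (σ₁ * σ₂)⁻¹) * (σ₂ * σ₃)⁻¹ := by group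
    _ = σ₃ := by rw [mul_conj_eq_of_braid braid_rel_12, mul_conj_eq_of_braid braid_rel_23]

theorem conjNormLE_σ₂σ₃σ₁σ₂ : ConjNormLE σ₁ 4 (σ₂ * σ₃ * (σ₁ * σ₂)) := by
  have hσ₁ : ConjNormLE σ₁ 1 σ₁ := .of_isConj (.inl (.refl _))
  have hσ₂ : ConjNormLE σ₁ 1 σ₂ :=
    .of_isConj (.inl (isConj_iff.mpr ⟨_, mul_conj_eq_of_braid braid_rel_12⟩))
  have hσ₃ : ConjNormLE σ₁ 1 σ₃ := .of_isConj (.inl (isConj_iff.mpr ⟨_, conj_σ₁_eq_σ₃⟩))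
  exact (hσ₂.mul hσ₃).mul (hσ₁.mul hσ₂)

theorem conjNormLE_pow_σ₁_mul_σ₃_inv (n : ℕ) : ConjNormLE σ₁ 8 ((σ₁ * σ₃⁻¹) ^ n) := by
  rw [mul_inv_pow_eq_commutatorElement commute_σ₁_σ₃ conj_σ₁_eq_σ₃]
  exact conjNormLE_σ₂σ₃σ₁σ₂.commutator _

end BraidGroup4

theorem braid4_bounded_cyclic_subgroup :
    ∀ σ₁ σ₃ : BraidGroup4,
      σ₁ = PresentedGroup.of 0 → σ₃ = PresentedGroup.of 2 →
      ∀ n : ℕ, ∃ (k : ℕ), k ≤ 10 ∧ ∃ s : Fin k → BraidGroup4,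
        (∀ i, (∃ β : BraidGroup4, s i = β * σ₁ * β⁻¹) ∨
              (∃ β : BraidGroup4, s i = β * σ₁⁻¹ * β⁻¹)) ∧
        (σ₁ * σ₃⁻¹) ^ n = (List.ofFn s).prod := by
  rintro σ₁ σ₃ rfl rfl n
  obtain ⟨l, hlen, hl, hprod⟩ := BraidGroup4.conjNormLE_pow_σ₁_mul_σ₃_inv n
  have hconj {a x : BraidGroup4} (h : IsConj a x) : ∃ β, x = β * a * β⁻¹ :=
    (isConj_iff.mp h).imp fun _ => Eq.symm
  refine ⟨l.length, by omega, l.get, fun i => ?_, by rw [List.ofFn_get, hprod]⟩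
  exact (hl _ (List.get_mem l i)).imp hconj hconj
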